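/- Let F = L_N ∘ r ∘ L_{N-1} ∘ ⋯ ∘ r ∘ L₁ : ℝⁿ → ℝ^{n_N} be a feed-forward ReLU network, where the L_i are affine maps and r is the entrywise ReLU function. Then for every index i ∈ {1, …, n_N}, the decision region {x ∈ ℝⁿ : F(x)_i > F(x)_j for all j ≠ i} is a semilinear set in ℝⁿ. -/

import Mathlib

open MeasureTheory

/-- A basic semilinear set in ℝⁿ: the set of points where finitely many affine
functions vanish and finitely many affine functions are positive. -/
def IsBasicSemilinear {n : ℕ} (S : Set (Fin n → ℝ)) : Prop :=
  ∃ (k l : ℕ) (f : Fin k → ((Fin n → ℝ) →ᵃ[ℝ] ℝ)) (g : Fin l → ((Fin n → ℝ) →ᵃ[ℝ] ℝ)),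
    S = {x | (∀ i, f i x = 0) ∧ ∀ j, 0 < g j x}

/-- A semilinear set in ℝⁿ is a finite union of basic semilinear sets. -/
def IsSemilinear {n : ℕ} (S : Set (Fin n → ℝ)) : Prop :=
  ∃ (m : ℕ) (B : Fin m → Set (Fin n → ℝ)),
    (∀ i, IsBasicSemilinear (B i)) ∧ S = ⋃ i, B i

/-- A function `f : D → T` is semilinear if every fiber `f⁻¹ {t}` equals the
intersection of `D` with some semilinear set. -/
def IsSemilinearFnOn {n : ℕ} {T : Type*} (D : Set (Fin n → ℝ)) (f : (Fin n → ℝ) → T) : Prop :=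
  ∀ t : T, ∃ S : Set (Fin n → ℝ), IsSemilinear S ∧ {x ∈ D | f x = t} = D ∩ S

/-- Entrywise ReLU. -/
def relu {m : ℕ} (y : Fin m → ℝ) : Fin m → ℝ := fun i => max (y i) 0

/-!
A ReLU network is piecewise affine with finitely many basic semilinear pieces: affine maps
are, `relu` is (its pieces are the sign patterns of the input), and the class is closed
under composition because the preimage of a basic semilinear set under an affine map is
again basic semilinear. The decision region of output `i` is the preimage of the basic
semilinear set `{y | ∀ j ≠ i, 0 < y i - y j}`, and pulling it back piece by piece writes it
as a finite union of basic semilinear sets.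
-/

namespace IsBasicSemilinear

variable {n : ℕ}

theorem of_fintype {ι κ : Type*} [Fintype ι] [Fintype κ]
    (f : ι → (Fin n → ℝ) →ᵃ[ℝ] ℝ) (g : κ → (Fin n → ℝ) →ᵃ[ℝ] ℝ) :
    IsBasicSemilinear {x | (∀ i, f i x = 0) ∧ ∀ j, 0 < g j x} := by
  refine ⟨Fintype.card ι, Fintype.card κ, f ∘ (Fintype.equivFin ι).symm,
    g ∘ (Fintype.equivFin κ).symm, ?_⟩
  ext x
  exact and_congr (Fintype.equivFin ι).forall_congr_left (Fintype.equivFin κ).forall_congr_left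

theorem univ : IsBasicSemilinear (Set.univ : Set (Fin n → ℝ)) :=
  ⟨0, 0, Fin.elim0, Fin.elim0, by simp⟩

theorem inter {S T : Set (Fin n → ℝ)} (hS : IsBasicSemilinear S) (hT : IsBasicSemilinear T) :
    IsBasicSemilinear (S ∩ T) := by
  obtain ⟨k, l, f, g, rfl⟩ := hS
  obtain ⟨k', l', f', g', rfl⟩ := hT
  convert of_fintype (Sum.elim f f') (Sum.elim g g') using 1
  ext x
  simp only [Set.mem_inter_iff, Set.mem_ofPred_eq, Sum.forall, Sum.elim_inl, Sum.elim_inr]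
  tauto

theorem preimage {m : ℕ} {S : Set (Fin m → ℝ)} (hS : IsBasicSemilinear S)
    (A : (Fin n → ℝ) →ᵃ[ℝ] (Fin m → ℝ)) : IsBasicSemilinear (A ⁻¹' S) := by
  obtain ⟨k, l, f, g, rfl⟩ := hS
  exact ⟨k, l, fun i => (f i).comp A, fun j => (g j).comp A, rfl⟩

/-- A sign condition `sign (g x) = ±1` is the strict inequality `0 < ±g x`. -/
theorem setOf_sign_eq {ι : Type*} [Fintype ι] (g : ι → (Fin n → ℝ) →ᵃ[ℝ] ℝ) (s : ι → SignType) :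
    IsBasicSemilinear {x | ∀ j, SignType.sign (g j x) = s j} := by
  convert of_fintype (fun j : {j // s j = 0} => g j) (fun j : {j // s j ≠ 0} => (s j : ℝ) • g j)
    using 1
  ext x
  simp only [Set.mem_ofPred_eq, Subtype.forall, AffineMap.coe_smul, Pi.smul_apply, smul_eq_mul,
    ← forall_and]
  refine forall_congr' fun j => ?_
  cases s j <;> simp [sign_eq_zero_iff, sign_eq_one_iff, sign_eq_neg_one_iff]

end IsBasicSemilinear

theorem IsSemilinear.iUnion {n : ℕ} {ι : Type*} [Fintype ι] {B : ι → Set (Fin n → ℝ)}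
    (hB : ∀ i, IsBasicSemilinear (B i)) : IsSemilinear (⋃ i, B i) :=
  ⟨Fintype.card ι, B ∘ (Fintype.equivFin ι).symm, fun _ => hB _,
    ((Fintype.equivFin ι).symm.iSup_comp (g := B)).symm⟩

theorem isBasicSemilinear_setOf_forall_ne_lt {m : ℕ} (i : Fin m) :
    IsBasicSemilinear {y : Fin m → ℝ | ∀ j, j ≠ i → y j < y i} := by
  convert IsBasicSemilinear.of_fintype (Fin.elim0 : Fin 0 → (Fin m → ℝ) →ᵃ[ℝ] ℝ)
    (fun j : {j // j ≠ i} => AffineMap.proj (k := ℝ) (P := fun _ => ℝ) i - AffineMap.proj j.1)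
    using 1
  ext y
  simp [sub_pos]

def IsPiecewiseAffine {n m : ℕ} (F : (Fin n → ℝ) → (Fin m → ℝ)) : Prop :=
  ∃ (ι : Type) (_ : Fintype ι) (P : ι → Set (Fin n → ℝ)) (A : ι → (Fin n → ℝ) →ᵃ[ℝ] (Fin m → ℝ)),
    (∀ k, IsBasicSemilinear (P k)) ∧ (⋃ k, P k) = Set.univ ∧ ∀ k, Set.EqOn F (A k) (P k)

theorem AffineMap.isPiecewiseAffine {n m : ℕ} (A : (Fin n → ℝ) →ᵃ[ℝ] (Fin m → ℝ)) :
    IsPiecewiseAffine A :=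
  ⟨Unit, inferInstance, fun _ => Set.univ, fun _ => A, fun _ => IsBasicSemilinear.univ,
    Set.iUnion_const _, fun _ => Set.eqOn_refl _ _⟩

theorem isPiecewiseAffine_relu (m : ℕ) : IsPiecewiseAffine (relu (m := m)) := by
  refine ⟨Fin m → SignType, inferInstance, fun s => {y | ∀ j, SignType.sign (y j) = s j},
    fun s => (LinearMap.pi fun j => if s j = 1 then LinearMap.proj j else 0).toAffineMap,
    fun s => IsBasicSemilinear.setOf_sign_eq (fun j => (LinearMap.proj j).toAffineMap) s,
    Set.eq_univ_of_forall fun y => Set.mem_iUnion.2 ⟨fun j => SignType.sign (y j), fun _ => rfl⟩,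
    fun s y hy => funext fun j => ?_⟩
  rcases lt_trichotomy (y j) 0 with h | h | h <;> simp [relu, ← hy j, h, h.le]

theorem IsPiecewiseAffine.comp {n m p : ℕ} {F : (Fin m → ℝ) → (Fin p → ℝ)}
    {H : (Fin n → ℝ) → (Fin m → ℝ)} (hF : IsPiecewiseAffine F) (hH : IsPiecewiseAffine H) :
    IsPiecewiseAffine (F ∘ H) := by
  obtain ⟨ι, _, P, A, hP, hPcov, hFA⟩ := hF
  obtain ⟨κ, _, Q, B, hQ, hQcov, hHB⟩ := hH
  refine ⟨κ × ι, inferInstance, fun k => Q k.1 ∩ B k.1 ⁻¹' P k.2, fun k => (A k.2).comp (B k.1),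
    fun k => (hQ k.1).inter ((hP k.2).preimage _), ?_, fun k x hx => ?_⟩
  · refine Set.eq_univ_of_forall fun x => ?_
    obtain ⟨k, hk⟩ := Set.mem_iUnion.1 (hQcov ▸ Set.mem_univ x)
    obtain ⟨l, hl⟩ := Set.mem_iUnion.1 (hPcov ▸ Set.mem_univ (B k x))
    exact Set.mem_iUnion.2 ⟨(k, l), hk, hl⟩
  · simp only [Function.comp_apply, AffineMap.comp_apply, hHB k.1 hx.1, hFA k.2 hx.2]

theorem IsPiecewiseAffine.isSemilinear_preimage {n m : ℕ} {F : (Fin n → ℝ) → (Fin m → ℝ)}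
    (hF : IsPiecewiseAffine F) {S : Set (Fin m → ℝ)} (hS : IsBasicSemilinear S) :
    IsSemilinear (F ⁻¹' S) := by
  obtain ⟨ι, _, P, A, hP, hPcov, hFA⟩ := hF
  have : F ⁻¹' S = ⋃ k, P k ∩ A k ⁻¹' S := by
    rw [← Set.univ_inter (F ⁻¹' S), ← hPcov, Set.iUnion_inter]
    exact Set.iUnion_congr fun k => (hFA k).inter_preimage_eq S
  rw [this]
  exact IsSemilinear.iUnion fun k => (hP k).inter (hS.preimage _)

/-- The decision regions of a feed-forward ReLU network are semilinear sets. -/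
theorem reluNetwork_decision_regions_semilinear (N : ℕ) (d : ℕ → ℕ)
    (L : (i : ℕ) → ((Fin (d i) → ℝ) →ᵃ[ℝ] (Fin (d (i+1)) → ℝ)))
    (G : (i : ℕ) → (Fin (d 0) → ℝ) → (Fin (d (i+1)) → ℝ))
    (hG0 : G 0 = fun x => L 0 x)
    (hGsucc : ∀ i : ℕ, G (i+1) = fun x => L (i+1) (relu (G i x))) :
    ∀ i : Fin (d (N+1)),
      IsSemilinear {x : Fin (d 0) → ℝ | ∀ j : Fin (d (N+1)), j ≠ i → G N x j < G N x i} := by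
  intro i
  have hG : ∀ k, IsPiecewiseAffine (G k) := by
    intro k
    induction k with
    | zero => exact hG0 ▸ (L 0).isPiecewiseAffine
    | succ k ih =>
      exact hGsucc k ▸ (L (k + 1)).isPiecewiseAffine.comp ((isPiecewiseAffine_relu _).comp ih)
  exact (hG N).isSemilinear_preimage (isBasicSemilinear_setOf_forall_ne_lt i)
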